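/- For every real β with 1 < β ≤ 2, the family (g_k^{(β)})_{k ∈ ℤ} is summable and Σ_{k ∈ ℤ} g_k^{(β)} = 0. -/

import Mathlib

open Real Filter Finset Topology

/-- The fractional centred difference coefficients
`g_k^{(β)} = (−1)^k Γ(β+1) / (Γ(β/2 − k + 1) Γ(β/2 + k + 1))`. -/
noncomputable def g (β : ℝ) (k : ℤ) : ℝ :=
  (-1 : ℝ) ^ k * Real.Gamma (β + 1) /
    (Real.Gamma (β / 2 - k + 1) * Real.Gamma (β / 2 + k + 1))

namespace GAux

lemma neg_one_zpow_cases (k : ℤ) : ((-1:ℝ))^k = 1 ∨ ((-1:ℝ))^k = -1 := by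
  rcases Int.even_or_odd k with h | h
  · exact Or.inl (Even.neg_one_zpow h)
  · exact Or.inr (Odd.neg_one_zpow h)

variable {c : ℝ}

lemma not_int (hc1 : 1/2 < c) (hc2 : c < 1) (j : ℤ) : c ≠ (j:ℝ) := by
  intro h
  have h1 : (0:ℝ) < (j:ℝ) := by rw [← h]; linarith
  have h2 : (j:ℝ) < 1 := by rw [← h]; linarith
  have h1' : (0:ℤ) < j := by exact_mod_cast h1
  have h2' : j < 1 := by exact_mod_cast h2
  omega

lemma Gamma_add_ne (hc1 : 1/2 < c) (hc2 : c < 1) (j : ℤ) : Real.Gamma (c + j) ≠ 0 := by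
  apply Real.Gamma_ne_zero
  intro m hm
  exact not_int hc1 hc2 (-(m:ℤ) - j) (by push_cast; linarith)

lemma Gamma_sub_ne (hc1 : 1/2 < c) (hc2 : c < 1) (j : ℤ) : Real.Gamma ((j:ℝ) - c) ≠ 0 := by
  apply Real.Gamma_ne_zero
  intro m hm
  exact not_int hc1 hc2 (j + (m:ℤ)) (by push_cast; linarith)

lemma sin_pos (hc1 : 1/2 < c) (hc2 : c < 1) : 0 < Real.sin (π * c) := by
  apply Real.sin_pos_of_pos_of_lt_pi
  · positivity
  · nlinarith [Real.pi_pos]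

/-- reflection: `Γ(c - k + 1) * Γ(k - c) = -π / ((-1)^k * sin (π c))`. -/
lemma refl (hc1 : 1/2 < c) (hc2 : c < 1) (k : ℤ) :
    Real.Gamma (c - k + 1) * Real.Gamma ((k:ℝ) - c)
      = -π / (((-1:ℝ))^k * Real.sin (π * c)) := by
  have h := Real.Gamma_mul_Gamma_one_sub (c - k + 1)
  rw [show (1:ℝ) - (c - k + 1) = (k:ℝ) - c by ring] at h
  rw [show π * (c - k + 1) = π * c + ((1 - k : ℤ):ℝ) * π by push_cast; ring] at h
  rw [Real.sin_add_int_mul_pi] at h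
  rw [h, show ((1:ℤ) - k) = -(k - 1) by ring, zpow_neg, zpow_sub₀ (by norm_num : (-1:ℝ) ≠ 0)]
  rcases neg_one_zpow_cases k with h1 | h1 <;> rw [h1] <;> norm_num <;> ring

/-- The key closed form: `g (2c) k = -D * Γ(k-c)/Γ(k+c+1)` with `D = Γ(2c+1) sin(πc)/π`. -/
lemma g_formula {β : ℝ} (hβ : β = 2*c) (hc1 : 1/2 < c) (hc2 : c < 1) (k : ℤ) :
    g β k = -(Real.Gamma (β + 1) * Real.sin (π * c) / π)
      * (Real.Gamma ((k:ℝ) - c) / Real.Gamma ((k:ℝ) + c + 1)) := by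
  unfold g
  have hhalf : β / 2 = c := by rw [hβ]; ring
  rw [hhalf]
  have hG1 : Real.Gamma (c - k + 1) ≠ 0 := by
    have := Gamma_add_ne hc1 hc2 (1 - k)
    rwa [show c + ((1 - k : ℤ):ℝ) = c - k + 1 by push_cast; ring] at this
  have hG2 : Real.Gamma (c + k + 1) ≠ 0 := by
    have := Gamma_add_ne hc1 hc2 (k + 1)
    rwa [show c + ((k + 1 : ℤ):ℝ) = c + k + 1 by push_cast; ring] at this
  have hG3 : Real.Gamma ((k:ℝ) - c) ≠ 0 := Gamma_sub_ne hc1 hc2 k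
  have hs := (sin_pos hc1 hc2).ne'
  have hrefl := refl hc1 hc2 k
  rw [show (k:ℝ) + c + 1 = c + k + 1 by ring]
  rcases neg_one_zpow_cases k with h1 | h1 <;> rw [h1] at hrefl ⊢
  · have hr : Real.Gamma (c - k + 1) * Real.Gamma ((k:ℝ) - c) * Real.sin (π * c) = -π := by
      rw [hrefl, one_mul, div_mul_cancel₀ _ hs]
    field_simp
    rw [show c * π = π * c by ring]
    linear_combination (Real.Gamma (β+1)) * hr
  · have hr : Real.Gamma (c - k + 1) * Real.Gamma ((k:ℝ) - c) * Real.sin (π * c) = π := by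
      rw [hrefl, neg_one_mul, div_neg, neg_mul, div_mul_cancel₀ _ hs, neg_neg]
    field_simp
    rw [show c * π = π * c by ring]
    linear_combination (Real.Gamma (β+1)) * hr

noncomputable def fq (c : ℝ) (k : ℤ) : ℝ := Real.Gamma ((k:ℝ) - c) / Real.Gamma ((k:ℝ) + c)

lemma fq_step (hc1 : 1/2 < c) (hc2 : c < 1) (k : ℤ) :
    Real.Gamma ((k:ℝ) - c) / Real.Gamma ((k:ℝ) + c + 1)
      = (fq c k - fq c (k+1)) / (2*c) := by
  have hkc : ((k:ℝ) - c) ≠ 0 := by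
    have := not_int hc1 hc2 k; intro h; apply this; linarith
  have hkc' : ((k:ℝ) + c) ≠ 0 := by
    have := not_int hc1 hc2 (-k); intro h; apply this; push_cast; linarith
  have h1 : Real.Gamma ((k:ℝ) + 1 - c) = ((k:ℝ) - c) * Real.Gamma ((k:ℝ) - c) := by
    rw [show (k:ℝ) + 1 - c = ((k:ℝ) - c) + 1 by ring, Real.Gamma_add_one hkc]
  have h2 : Real.Gamma ((k:ℝ) + 1 + c) = ((k:ℝ) + c) * Real.Gamma ((k:ℝ) + c) := by
    rw [show (k:ℝ) + 1 + c = ((k:ℝ) + c) + 1 by ring, Real.Gamma_add_one hkc']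
  have h3 : Real.Gamma ((k:ℝ) + c + 1) = ((k:ℝ) + c) * Real.Gamma ((k:ℝ) + c) := by
    rw [show (k:ℝ) + c + 1 = ((k:ℝ) + c) + 1 by ring, Real.Gamma_add_one hkc']
  have hGkc : Real.Gamma ((k:ℝ) + c) ≠ 0 := by
    have := Gamma_add_ne hc1 hc2 k
    rwa [show c + (k:ℝ) = (k:ℝ) + c by ring] at this
  unfold fq
  push_cast
  rw [h1, h2, h3]
  have hc0 : c ≠ 0 := by intro h; rw [h] at hc1; norm_num at hc1
  field_simp
  ring

lemma sum_telescope (f : ℤ → ℝ) (n : ℕ) :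
    ∑ k ∈ Finset.Icc (-(n:ℤ)) (n:ℤ), (f k - f (k+1)) = f (-(n:ℤ)) - f ((n:ℤ)+1) := by
  induction n with
  | zero => simp
  | succ n ih =>
    have hins : Finset.Icc (-((n:ℤ)+1)) ((n:ℤ)+1)
        = insert (-((n:ℤ)+1)) (insert ((n:ℤ)+1) (Finset.Icc (-(n:ℤ)) (n:ℤ))) := by
      ext x; simp only [Finset.mem_Icc, Finset.mem_insert]; omega
    push_cast
    rw [hins, Finset.sum_insert (by simp only [Finset.mem_Icc, Finset.mem_insert]; omega),
      Finset.sum_insert (by simp only [Finset.mem_Icc]; omega), ih]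
    ring_nf

lemma fq_neg (hc1 : 1/2 < c) (hc2 : c < 1) (n : ℕ) :
    fq c (-(n:ℤ)) = - fq c ((n:ℤ)+1) := by
  have hs := sin_pos hc1 hc2
  have hπ := Real.pi_pos
  have h1 := Real.Gamma_mul_Gamma_one_sub (-(n:ℝ) - c)
  rw [show (1:ℝ) - (-(n:ℝ) - c) = (n:ℝ) + 1 + c by ring,
    show π * (-(n:ℝ) - c) = -(π * c) + (Int.cast (-(n:ℤ)) : ℝ) * π by push_cast; ring,
    Real.sin_add_int_mul_pi, Real.sin_neg] at h1
  have h2 := Real.Gamma_mul_Gamma_one_sub (c - (n:ℝ))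
  rw [show (1:ℝ) - (c - (n:ℝ)) = (n:ℝ) + 1 - c by ring,
    show π * (c - (n:ℝ)) = π * c + (Int.cast (-(n:ℤ)) : ℝ) * π by push_cast; ring,
    Real.sin_add_int_mul_pi] at h2
  have hGp1 : 0 < Real.Gamma ((n:ℝ) + 1 + c) := Real.Gamma_pos_of_pos (by positivity)
  have hGp2 : 0 < Real.Gamma ((n:ℝ) + 1 - c) :=
    Real.Gamma_pos_of_pos (by linarith [n.cast_nonneg (α := ℝ)])
  have e1 : Real.Gamma (-(n:ℝ) - c)
      = π / ((-1:ℝ)^(-(n:ℤ)) * -Real.sin (π * c)) / Real.Gamma ((n:ℝ) + 1 + c) :=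
    (eq_div_iff hGp1.ne').mpr h1
  have e2 : Real.Gamma (c - (n:ℝ))
      = π / ((-1:ℝ)^(-(n:ℤ)) * Real.sin (π * c)) / Real.Gamma ((n:ℝ) + 1 - c) :=
    (eq_div_iff hGp2.ne').mpr h2
  unfold fq
  push_cast
  rw [show -(n:ℝ) + c = c - (n:ℝ) by ring, e1, e2]
  rcases neg_one_zpow_cases (-(n:ℤ)) with he | he <;> rw [he] <;>
    field_simp <;> ring

lemma sum_g {β : ℝ} (hβ : β = 2*c) (hc1 : 1/2 < c) (hc2 : c < 1) (n : ℕ) :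
    ∑ k ∈ Finset.Icc (-(n:ℤ)) (n:ℤ), g β k
      = (Real.Gamma (β+1) * Real.sin (π * c) / π / c)
        * (Real.Gamma ((n:ℝ)+1-c) / Real.Gamma ((n:ℝ)+1+c)) := by
  have hstep : ∀ k ∈ Finset.Icc (-(n:ℤ)) (n:ℤ), g β k
      = (-(Real.Gamma (β+1) * Real.sin (π*c) / π) / (2*c)) * (fq c k - fq c (k+1)) := by
    intro k _
    rw [g_formula hβ hc1 hc2 k, fq_step hc1 hc2 k]
    ring
  rw [Finset.sum_congr rfl hstep, ← Finset.mul_sum, sum_telescope (fq c) n, fq_neg hc1 hc2 n]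
  have hfq : fq c ((n:ℤ)+1) = Real.Gamma ((n:ℝ)+1-c) / Real.Gamma ((n:ℝ)+1+c) := by
    unfold fq
    push_cast
    ring_nf
  rw [hfq]
  have hc0 : c ≠ 0 := by intro h; rw [h] at hc1; norm_num at hc1
  have hπ := Real.pi_pos.ne'
  field_simp
  ring

lemma ratio_tendsto (hc1 : 1/2 < c) (hc2 : c < 1) :
    Tendsto (fun n : ℕ => Real.Gamma ((n:ℝ)+1-c) / Real.Gamma ((n:ℝ)+1+c)) atTop (𝓝 0) := by
  have hmono := Real.Gamma_strictMonoOn_Ici.monotoneOn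
  apply squeeze_zero' (g := fun n : ℕ => 1/((n:ℝ)+1-c))
  · filter_upwards with n
    have h1 : (0:ℝ) < Real.Gamma ((n:ℝ)+1-c) :=
      Real.Gamma_pos_of_pos (by linarith [n.cast_nonneg (α := ℝ)])
    have h2 : (0:ℝ) < Real.Gamma ((n:ℝ)+1+c) :=
      Real.Gamma_pos_of_pos (by linarith [n.cast_nonneg (α := ℝ)])
    positivity
  · filter_upwards [eventually_ge_atTop 2] with n hn
    have hn2 : (2:ℝ) ≤ (n:ℝ) := by exact_mod_cast hn
    have h1 : (0:ℝ) < (n:ℝ)+1-c := by linarith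
    have h2 : (0:ℝ) < Real.Gamma ((n:ℝ)+1+c) :=
      Real.Gamma_pos_of_pos (by linarith)
    rw [div_le_div_iff₀ h2 h1]
    have hG : Real.Gamma ((n:ℝ)+1-c) * ((n:ℝ)+1-c) = Real.Gamma ((n:ℝ)+2-c) := by
      rw [show (n:ℝ)+2-c = ((n:ℝ)+1-c)+1 by ring, Real.Gamma_add_one h1.ne']
      ring
    rw [mul_comm (Real.Gamma ((n:ℝ)+1-c)), mul_comm, hG]
    have := hmono (a := (n:ℝ)+2-c) (b := (n:ℝ)+1+c)
      (by simp only [Set.mem_Ici]; linarith) (by simp only [Set.mem_Ici]; linarith)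
      (by linarith)
    linarith
  · have h : Tendsto (fun n : ℕ => (n:ℝ)+1-c) atTop atTop := by
      have := tendsto_atTop_add_const_right atTop (1-c)
        (tendsto_natCast_atTop_atTop (R := ℝ))
      simpa [add_sub_assoc] using this
    exact h.inv_tendsto_atTop.congr (fun n => by simp [one_div])

lemma g_symm (β : ℝ) (k : ℤ) : g β (-k) = g β k := by
  unfold g
  have h : ((-1:ℝ))^(-k) = (-1:ℝ)^k := by
    rcases Int.even_or_odd k with h | h
    · rw [Even.neg_one_zpow h, Even.neg_one_zpow h.neg]
    · rw [Odd.neg_one_zpow h, Odd.neg_one_zpow h.neg]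
  simp only [Int.cast_neg]
  rw [h, show β/2 - -(k:ℝ) + 1 = β/2 + (k:ℝ) + 1 by ring,
    show β/2 + -(k:ℝ) + 1 = β/2 - (k:ℝ) + 1 by ring,
    mul_comm (Real.Gamma (β/2 + (k:ℝ) + 1))]


lemma beta_two : Summable (fun k : ℤ => g 2 k) ∧ ∑' k : ℤ, g 2 k = 0 := by
  have hsupp : ∀ k : ℤ, k ∉ ({-1,0,1} : Finset ℤ) → g 2 k = 0 := by
    intro k hk
    simp only [Finset.mem_insert, Finset.mem_singleton] at hk
    push_neg at hk
    obtain ⟨hk1, hk2, hk3⟩ := hk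
    unfold g
    rcases (by omega : 2 ≤ k ∨ k ≤ -2) with h | h
    · have hm : (((k-2).toNat : ℕ) : ℝ) = (k:ℝ) - 2 := by
        have h0 := Int.toNat_of_nonneg (by omega : (0:ℤ) ≤ k - 2)
        exact_mod_cast congrArg (Int.cast : ℤ → ℝ) h0
      rw [show (2:ℝ)/2 - (k:ℝ) + 1 = -(((k-2).toNat : ℕ) : ℝ) by rw [hm]; ring,
        Real.Gamma_neg_nat_eq_zero, zero_mul, div_zero]
    · have hm : (((-k-2).toNat : ℕ) : ℝ) = -(k:ℝ) - 2 := by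
        have h0 := Int.toNat_of_nonneg (by omega : (0:ℤ) ≤ -k - 2)
        exact_mod_cast congrArg (Int.cast : ℤ → ℝ) h0
      rw [show (2:ℝ)/2 + (k:ℝ) + 1 = -(((-k-2).toNat : ℕ) : ℝ) by rw [hm]; ring,
        Real.Gamma_neg_nat_eq_zero, mul_zero, div_zero]
  have hsummable : Summable (fun k : ℤ => g 2 k) := summable_of_ne_finset_zero hsupp
  refine ⟨hsummable, ?_⟩
  rw [tsum_eq_sum hsupp]
  have h3 : Real.Gamma 3 = 2 := by
    rw [show (3:ℝ) = 2 + 1 by norm_num, Real.Gamma_add_one two_ne_zero, Real.Gamma_two]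
    norm_num
  have hsum : ({-1,0,1} : Finset ℤ) = insert (-1 : ℤ) (insert (0 : ℤ) {1}) := rfl
  rw [hsum, Finset.sum_insert (by decide), Finset.sum_insert (by decide),
    Finset.sum_singleton]
  unfold g
  norm_num [h3, Real.Gamma_two, Real.Gamma_one]

end GAux

open GAux in
/-- Lemma 2.5: the family `(g_k^{(β)})_{k ∈ ℤ}` is summable and its sum is `0`. -/
theorem g_summable_and_tsum_zero (β : ℝ) (hβ1 : 1 < β) (hβ2 : β ≤ 2) :
    Summable (fun k : ℤ => g β k) ∧ ∑' k : ℤ, g β k = 0 := by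
  rcases eq_or_lt_of_le hβ2 with hβ2' | hβ2'
  · -- β = 2 : finitely supported
    subst hβ2'
    exact beta_two
  · -- 1 < β < 2
    set c : ℝ := β / 2 with hc
    have hβc : β = 2 * c := by rw [hc]; ring
    have hc1 : 1/2 < c := by rw [hc]; linarith
    have hc2 : c < 1 := by rw [hc]; linarith
    have hs := sin_pos hc1 hc2
    have hπ := Real.pi_pos
    have hGβ : 0 < Real.Gamma (β + 1) := Real.Gamma_pos_of_pos (by linarith)
    have hc0 : (0:ℝ) < c := by linarith
    -- nonpositivity away from 0
    have key : ∀ k : ℤ, 1 ≤ k → g β k ≤ 0 := by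
      intro k hk
      rw [g_formula hβc hc1 hc2 k]
      have hk1 : (1:ℝ) ≤ (k:ℝ) := by exact_mod_cast hk
      have h1 : 0 ≤ Real.Gamma ((k:ℝ) - c) := (Real.Gamma_pos_of_pos (by linarith)).le
      have h2 : 0 < Real.Gamma ((k:ℝ) + c + 1) := Real.Gamma_pos_of_pos (by linarith)
      have hq : 0 ≤ Real.Gamma ((k:ℝ) - c) / Real.Gamma ((k:ℝ) + c + 1) := by positivity
      have hD : 0 ≤ Real.Gamma (β+1) * Real.sin (π * c) / π := by positivity
      nlinarith [mul_nonneg hD hq]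
    have hgnonpos : ∀ k : ℤ, k ≠ 0 → g β k ≤ 0 := by
      intro k hk
      rcases lt_or_gt_of_ne hk with h | h
      · have := key (-k) (by omega)
        rwa [g_symm] at this
      · exact key k (by omega)
    -- the partial sums over symmetric intervals are nonnegative
    have hSnonneg : ∀ n : ℕ, 0 ≤ ∑ k ∈ Finset.Icc (-(n:ℤ)) (n:ℤ), g β k := by
      intro n
      rw [sum_g hβc hc1 hc2 n]
      have h1 : 0 ≤ Real.Gamma ((n:ℝ)+1-c) :=
        (Real.Gamma_pos_of_pos (by linarith [n.cast_nonneg (α := ℝ)])).le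
      have h2 : 0 < Real.Gamma ((n:ℝ)+1+c) :=
        Real.Gamma_pos_of_pos (by linarith [n.cast_nonneg (α := ℝ)])
      positivity
    set F : ℤ → ℝ := fun k => if k = 0 then 0 else -(g β k) with hF
    have hF0 : 0 ≤ F := by
      intro k
      by_cases hk : k = 0 <;> simp [hF, hk]
      linarith [hgnonpos k hk]
    have hFsum_le : ∀ u : Finset ℤ, ∑ k ∈ u, F k ≤ g β 0 := by
      intro u
      set n : ℕ := u.sup (fun k => k.natAbs) with hn
      have hsub : u ⊆ Finset.Icc (-(n:ℤ)) (n:ℤ) := by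
        intro k hk
        have hle : k.natAbs ≤ n := Finset.le_sup (f := fun k : ℤ => k.natAbs) hk
        simp only [Finset.mem_Icc]
        omega
      have h1 : ∑ k ∈ u, F k ≤ ∑ k ∈ Finset.Icc (-(n:ℤ)) (n:ℤ), F k :=
        Finset.sum_le_sum_of_subset_of_nonneg hsub (fun i _ _ => hF0 i)
      have h2 : ∑ k ∈ Finset.Icc (-(n:ℤ)) (n:ℤ), F k
          = g β 0 - ∑ k ∈ Finset.Icc (-(n:ℤ)) (n:ℤ), g β k := by
        have hmem : (0:ℤ) ∈ Finset.Icc (-(n:ℤ)) (n:ℤ) := by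
          simp only [Finset.mem_Icc]; omega
        have hcong : ∀ k ∈ Finset.Icc (-(n:ℤ)) (n:ℤ),
            F k = (if k = 0 then g β 0 else 0) - g β k := by
          intro k _
          by_cases hk : k = 0 <;> simp [hF, hk]
        rw [Finset.sum_congr rfl hcong, Finset.sum_sub_distrib,
          Finset.sum_ite_eq' (Finset.Icc (-(n:ℤ)) (n:ℤ)) 0 (fun _ => g β 0), if_pos hmem]
      linarith [hSnonneg n, h1, h2.le, h2.ge]
    have hFsummable : Summable F := summable_of_sum_le hF0 hFsum_le
    have hgsummable : Summable (fun k : ℤ => g β k) := by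
      have hrw : (fun k : ℤ => g β k) = fun k => (if k = 0 then g β 0 else 0) - F k := by
        funext k
        by_cases hk : k = 0 <;> simp [hF, hk]
      rw [hrw]
      apply Summable.sub _ hFsummable
      apply summable_of_ne_finset_zero (s := ({0} : Finset ℤ))
      intro k hk
      simp only [Finset.mem_singleton] at hk
      simp [hk]
    refine ⟨hgsummable, ?_⟩
    -- limit of symmetric partial sums
    have hmono : Monotone (fun n : ℕ => Finset.Icc (-(n:ℤ)) (n:ℤ)) := by
      intro a b hab
      apply Finset.Icc_subset_Icc <;> [skip; exact_mod_cast hab]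
      simp only [neg_le_neg_iff]
      exact_mod_cast hab
    have hexh : ∀ x : ℤ, ∃ n : ℕ, x ∈ Finset.Icc (-(n:ℤ)) (n:ℤ) := by
      intro x
      exact ⟨x.natAbs, by simp only [Finset.mem_Icc]; omega⟩
    have htendsets := tendsto_atTop_finset_of_monotone hmono hexh
    have h1 : Tendsto (fun n : ℕ => ∑ k ∈ Finset.Icc (-(n:ℤ)) (n:ℤ), g β k)
        atTop (𝓝 (∑' k : ℤ, g β k)) := hgsummable.hasSum.comp htendsets
    have h2 : Tendsto (fun n : ℕ => ∑ k ∈ Finset.Icc (-(n:ℤ)) (n:ℤ), g β k)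
        atTop (𝓝 0) := by
      have h := (ratio_tendsto hc1 hc2).const_mul (Real.Gamma (β+1) * Real.sin (π * c) / π / c)
      rw [mul_zero] at h
      apply h.congr
      intro n
      exact (sum_g hβc hc1 hc2 n).symm
    exact tendsto_nhds_unique h1 h2
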